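/- Let n ≥ 7 and let r, l be nonzero complex numbers with r^(2k) ≠ 1 for all integers k with 1 ≤ k ≤ n. If l belongs to both {r, -r³, r^(-(2n-5)), r^(-(n-4)), -r^(-(n-4))} and {r, -r³, r^(-(2n-7)), r^(-(n-5)), -r^(-(n-5))}, then l = r or l = -r³. -/

import Mathlib

lemma zpow_two_mul_ne_one {M : Type*} [DivisionMonoid M] {n : ℕ} {r : M}
    (hr : ∀ k : ℕ, 1 ≤ k → k ≤ n → r ^ (2 * k) ≠ 1) {m : ℤ} (hm : m ≠ 0)
    (hmn : m.natAbs ≤ n) : r ^ (2 * m) ≠ 1 := by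
  have hk := hr m.natAbs (by omega) hmn
  rcases Int.natAbs_eq m with h | h <;> rw [h]
  · exact_mod_cast hk
  · rw [mul_neg, zpow_neg, ne_eq, inv_eq_one]
    exact_mod_cast hk

lemma zpow_two_mul_sub_eq_one {G₀ : Type*} [GroupWithZero G₀] {r : G₀} (hr : r ≠ 0)
    {a b : ℤ} (h : r ^ (2 * a) = r ^ (2 * b)) : r ^ (2 * (a - b)) = 1 := by
  rw [mul_sub, zpow_sub₀ hr, h, div_self (zpow_ne_zero _ hr)]

lemma sq_eq_zpow_of_mem {K : Type*} [DivisionRing K] {r l : K} {a b : ℤ}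
    (hl : l ∈ ({r, -r ^ 3, r ^ a, r ^ b, -r ^ b} : Set K)) :
    l = r ∨ l = -r ^ 3 ∨ ∃ c, (c = a ∨ c = b) ∧ l ^ 2 = r ^ (2 * c) := by
  have hsq (c : ℤ) : (r ^ c) ^ 2 = r ^ (2 * c) := by rw [mul_comm, zpow_mul]; norm_cast
  simp only [Set.mem_insert_iff, Set.mem_singleton_iff] at hl
  rcases hl with rfl | rfl | rfl | rfl | rfl
  · exact .inl rfl
  · exact .inr (.inl rfl)
  · exact .inr (.inr ⟨a, .inl rfl, hsq a⟩)
  · exact .inr (.inr ⟨b, .inr rfl, hsq b⟩)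
  · exact .inr (.inr ⟨b, .inr rfl, by rw [neg_sq, hsq]⟩)

theorem stmt_3_general (n : ℕ) (hn : 7 ≤ n) (r l : ℂ) (hr : r ≠ 0)
    (hsemi : ∀ k : ℕ, 1 ≤ k → k ≤ n → r ^ (2 * k) ≠ 1)
    (h1 : l ∈ ({r, -r ^ 3, r ^ (-(2 * (n : ℤ) - 5)), r ^ (-((n : ℤ) - 4)),
      -r ^ (-((n : ℤ) - 4))} : Set ℂ))
    (h2 : l ∈ ({r, -r ^ 3, r ^ (-(2 * (n : ℤ) - 7)), r ^ (-((n : ℤ) - 5)),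
      -r ^ (-((n : ℤ) - 5))} : Set ℂ)) :
    l = r ∨ l = -r ^ 3 := by
  rcases sq_eq_zpow_of_mem h1 with h | h | ⟨a, ha, hla⟩
  · exact .inl h
  · exact .inr h
  rcases sq_eq_zpow_of_mem h2 with h | h | ⟨b, hb, hlb⟩
  · exact .inl h
  · exact .inr h
  -- squaring identifies `±r ^ a` with `±r ^ b`; the possible `a - b` are `-2`, `-n`, `n - 3`, `-1`
  have hab : a - b ≠ 0 ∧ (a - b).natAbs ≤ n := by omega
  exact absurd (zpow_two_mul_sub_eq_one hr (hla.symm.trans hlb))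
    (zpow_two_mul_ne_one hsemi hab.1 hab.2)

theorem stmt_3 (n : ℕ) (hn : 7 ≤ n) (r l : ℂ) (hr : r ≠ 0) (hl : l ≠ 0)
    (hsemi : ∀ k : ℕ, 1 ≤ k → k ≤ n → r ^ (2 * k) ≠ 1)
    (h1 : l ∈ ({r, -r ^ 3, r ^ (-(2 * (n : ℤ) - 5)), r ^ (-((n : ℤ) - 4)),
      -r ^ (-((n : ℤ) - 4))} : Set ℂ))
    (h2 : l ∈ ({r, -r ^ 3, r ^ (-(2 * (n : ℤ) - 7)), r ^ (-((n : ℤ) - 5)),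
      -r ^ (-((n : ℤ) - 5))} : Set ℂ)) :
    l = r ∨ l = -r ^ 3 :=
  stmt_3_general n hn r l hr hsemi h1 h2
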